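/- Let D ∈ M_{k×l}(ℝ) be a regulable matrix with no zero rows and no zero columns, and let E be any diagonal matrix with diagonal entries in {−1,1} such that D·E is oriented. Let C₁,…,C_r be the connected components of the column graph of D, let mᵢ be the largest column index in Cᵢ, and let U ∈ M_{l×l}(ℝ) be the matrix with U(j,j) = 1 for all j, U(j,mᵢ) = 1 for all j ∈ Cᵢ and each 1 ≤ i ≤ r, and all other entries 0. Then R = D·(E·U) is a weak column reduction of D. -/

import Mathlib

open scoped Classical

/-- A real matrix is *non-branching* if all its entries lie in `{-1, 0, 1}` and every
row has at most two non-zero entries. -/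
def NonBranching {k l : ℕ} (D : Matrix (Fin k) (Fin l) ℝ) : Prop :=
  (∀ i j, D i j = -1 ∨ D i j = 0 ∨ D i j = 1) ∧
    ∀ i : Fin k, (Finset.univ.filter fun j => D i j ≠ 0).card ≤ 2

/-- The `j`-th column of a matrix, as a vector. -/
def col {k l : ℕ} (M : Matrix (Fin k) (Fin l) ℝ) (j : Fin l) : Fin k → ℝ :=
  fun i => M i j

/-- The number of non-zero entries of the `j`-th column (the cardinality of its support). -/
noncomputable def suppCard {k l : ℕ} (M : Matrix (Fin k) (Fin l) ℝ) (j : Fin l) : ℕ :=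
  (Finset.univ.filter fun i => M i j ≠ 0).card

/-- `R = D * V` is a *weak column reduction* of `D`:
`V` is upper-triangular with entries in `{-1,0,1}` and diagonal entries in `{-1,1}`,
the non-zero columns of `R` are linearly independent, the supports of the columns of `V`
with more than one non-zero entry are pairwise disjoint, and the `i`-th column of `V` has
more than one non-zero entry iff the `i`-th column of `R` is zero. -/
def WeakColumnReduction {k l : ℕ} (D R : Matrix (Fin k) (Fin l) ℝ)
    (V : Matrix (Fin l) (Fin l) ℝ) : Prop :=
  R = D * V ∧
  (∀ i j : Fin l, j < i → V i j = 0) ∧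
  (∀ i j : Fin l, V i j = -1 ∨ V i j = 0 ∨ V i j = 1) ∧
  (∀ i : Fin l, V i i = -1 ∨ V i i = 1) ∧
  (LinearIndependent ℝ fun j : {j : Fin l // col R j ≠ 0} => col R j.1) ∧
  (∀ j₁ j₂ : Fin l, j₁ ≠ j₂ → 1 < suppCard V j₁ → 1 < suppCard V j₂ →
    Disjoint (Finset.univ.filter fun i => V i j₁ ≠ 0)
      (Finset.univ.filter fun i => V i j₂ ≠ 0)) ∧
  (∀ j : Fin l, 1 < suppCard V j ↔ col R j = 0)


/-- A matrix is *oriented* if each of its rows contains at most one entry equal to `1`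
and at most one entry equal to `-1`. -/
def Oriented {k l : ℕ} (M : Matrix (Fin k) (Fin l) ℝ) : Prop :=
  ∀ i : Fin k, (Finset.univ.filter fun j => M i j = 1).card ≤ 1 ∧
    (Finset.univ.filter fun j => M i j = -1).card ≤ 1

/-- The *column graph* of a matrix `D`: the simple graph on the column indices in which
two distinct columns are adjacent iff some row has a non-zero entry in both columns. -/
def columnGraph {k l : ℕ} (D : Matrix (Fin k) (Fin l) ℝ) : SimpleGraph (Fin l) where
  Adj j₁ j₂ := j₁ ≠ j₂ ∧ ∃ i : Fin k, D i j₁ ≠ 0 ∧ D i j₂ ≠ 0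
  symm := by
    constructor
    intro a b h
    exact ⟨h.1.symm, h.2.imp fun i hi => ⟨hi.2, hi.1⟩⟩
  loopless := by
    constructor
    intro a h
    exact h.1 rfl

/-!
After the sign change `A = D * diagonal ε`, every row of `A` is `e a - e b` for an edge `ab` of the
column graph, so `A` is an incidence matrix of an orientation of that graph and its kernel
consists of the vectors that are constant on connected components. For a component maximum `m`,
column `m` of `U` is the indicator vector of the component, which `A` annihilates; every other
column of `U` is a unit vector, so the corresponding column of `R` is the non-zero column of `A`.
A linear relation among the latter is a kernel vector of `A` vanishing at every component
maximum, hence it vanishes.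
-/

open scoped Matrix

lemma linearIndependent_subtype_ne_zero {ι K M : Type*} [Fintype ι] [Ring K]
    [AddCommGroup M] [Module K M] (v : ι → M)
    (h : ∀ c : ι → K, ∑ i, c i • v i = 0 → ∀ i, v i ≠ 0 → c i = 0) :
    LinearIndependent K (fun i : {i // v i ≠ 0} => v i) := by
  classical
  rw [Fintype.linearIndependent_iff]
  intro g hg i
  let c : ι → K := fun j => if hj : v j ≠ 0 then g ⟨j, hj⟩ else 0
  have hc : ∑ j, c j • v j = 0 := by
    rw [← Finset.sum_filter_of_ne (p := fun j => v j ≠ 0) fun j _ hj => right_ne_zero_of_smul hj,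
      Finset.sum_subtype _ (p := fun j => v j ≠ 0) fun _ => by simp]
    refine (Finset.sum_congr rfl fun j _ => ?_).trans hg
    simp [c, j.2]
  simpa [c, i.2] using h c hc i i.2

lemma col_mul {k l n : ℕ} (M : Matrix (Fin k) (Fin n) ℝ) (N : Matrix (Fin n) (Fin l) ℝ)
    (j : Fin l) : col (M * N) j = M *ᵥ fun i => N i j :=
  rfl

lemma sum_smul_col {k l : ℕ} (M : Matrix (Fin k) (Fin l) ℝ) (c : Fin l → ℝ) :
    ∑ j, c j • col M j = M *ᵥ c := by
  ext i
  simp [col, Matrix.mulVec, dotProduct, mul_comm]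

lemma exists_eq_single_sub_single {n : Type*} [Fintype n] [DecidableEq n] (r : n → ℝ)
    (hval : ∀ j, r j = -1 ∨ r j = 0 ∨ r j = 1)
    (hsupp : (Finset.univ.filter fun j => r j ≠ 0).card = 2)
    (hpos : (Finset.univ.filter fun j => r j = 1).card ≤ 1)
    (hneg : (Finset.univ.filter fun j => r j = -1).card ≤ 1) :
    ∃ j₁ j₂, j₁ ≠ j₂ ∧ r = Pi.single j₁ 1 - Pi.single j₂ 1 := by
  set P := Finset.univ.filter fun j => r j = 1
  set N := Finset.univ.filter fun j => r j = -1
  have hsplit : (Finset.univ.filter fun j => r j ≠ 0) = P ∪ N := by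
    ext j
    rcases hval j with h | h | h <;> simp [P, N, h]
  have hdisj : Disjoint P N := Finset.disjoint_filter.mpr fun j _ h => by norm_num [h]
  rw [hsplit, Finset.card_union_of_disjoint hdisj] at hsupp
  obtain ⟨j₁, hP⟩ := Finset.card_eq_one.mp (by omega : P.card = 1)
  obtain ⟨j₂, hN⟩ := Finset.card_eq_one.mp (by omega : N.card = 1)
  have hP' (j : n) : r j = 1 ↔ j = j₁ := by simpa [P] using Finset.ext_iff.mp hP j
  have hN' (j : n) : r j = -1 ↔ j = j₂ := by simpa [N] using Finset.ext_iff.mp hN j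
  refine ⟨j₁, j₂, fun h => ?_, funext fun j => ?_⟩
  · have := ((hP' j₁).mpr rfl).symm.trans ((hN' j₁).mpr h)
    norm_num at this
  · simp only [Pi.sub_apply, Pi.single_apply, ← hP', ← hN']
    rcases hval j with h | h | h <;> norm_num [h]

lemma filter_diagonal_mul_ne_zero {m n : Type*} [Fintype m] [DecidableEq m] {ε : m → ℝ}
    (hε : ∀ i, ε i ≠ 0) (N : Matrix m n ℝ) (j : n) :
    (Finset.univ.filter fun i => (Matrix.diagonal ε * N) i j ≠ 0) =
      Finset.univ.filter fun i => N i j ≠ 0 := by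
  ext i
  simp [Matrix.diagonal_mul, hε i]

lemma mulVec_apply_of_row_eq_single_sub_single {m n : Type*} [Fintype n] [DecidableEq n]
    {M : Matrix m n ℝ} {i : m} {j₁ j₂ : n} (hrow : M i = Pi.single j₁ 1 - Pi.single j₂ 1)
    (v : n → ℝ) :
    (M *ᵥ v) i = v j₁ - v j₂ := by
  change M i ⬝ᵥ v = _
  simp [hrow, sub_dotProduct]

namespace SimpleGraph

section Reachable

variable {V : Type*} {G : SimpleGraph V}

lemma Reachable.apply_eq_of_forall_adj {β : Type*} {f : V → β}
    (hf : ∀ a b, G.Adj a b → f a = f b) {a b : V} (h : G.Reachable a b) : f a = f b := by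
  rw [reachable_iff_reflTransGen] at h
  induction h with
  | refl => rfl
  | tail _ hadj ih => exact ih.trans (hf _ _ hadj)

end Reachable

variable {V : Type*} [LinearOrder V] (G : SimpleGraph V)

def IsComponentMax (m : V) : Prop := ∀ j, G.Reachable m j → j ≤ m

variable {G}

lemma reachable_and_forall_le_iff {j j' : V} :
    (G.Reachable j j' ∧ ∀ j'', G.Reachable j j'' → j'' ≤ j') ↔
      G.Reachable j j' ∧ G.IsComponentMax j' :=
  ⟨fun ⟨h, hle⟩ => ⟨h, fun j'' h'' => hle j'' (h.trans h'')⟩,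
    fun ⟨h, hmax⟩ => ⟨h, fun j'' h'' => hmax j'' (h.symm.trans h'')⟩⟩

lemma IsComponentMax.eq_of_reachable {m m' : V} (hm : G.IsComponentMax m)
    (hm' : G.IsComponentMax m') (h : G.Reachable m m') : m = m' :=
  le_antisymm (hm' m h.symm) (hm m' h)

lemma exists_reachable_isComponentMax [Finite V] (j : V) :
    ∃ m, G.Reachable j m ∧ G.IsComponentMax m := by
  obtain ⟨m, hjm, hmax⟩ :=
    Set.exists_max_image {x | G.Reachable j x} id (Set.toFinite _) ⟨j, Reachable.refl j⟩
  exact ⟨m, hjm, fun x hmx => hmax x (Reachable.trans hjm hmx)⟩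

variable (G) in
noncomputable def componentMaxMatrix (R : Type*) [Zero R] [One R] : Matrix V V R :=
  fun j j' => if j = j' ∨ (G.Reachable j j' ∧ G.IsComponentMax j') then 1 else 0

section componentMaxMatrix

variable {R : Type*} [Zero R] [One R]

lemma componentMaxMatrix_apply_of_lt {j j' : V} (h : j' < j) :
    G.componentMaxMatrix R j j' = 0 := by
  refine if_neg ?_
  rintro (rfl | ⟨hr, hmax⟩)
  · exact h.false
  · exact (hmax j hr.symm).not_gt h

lemma componentMaxMatrix_apply_self (j : V) : G.componentMaxMatrix R j j = 1 :=
  if_pos (Or.inl rfl)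

lemma componentMaxMatrix_apply_eq_zero_or_one (j j' : V) :
    G.componentMaxMatrix R j j' = 0 ∨ G.componentMaxMatrix R j j' = 1 := by
  unfold componentMaxMatrix; split_ifs <;> simp

lemma componentMaxMatrix_apply_of_isComponentMax {m : V} (hm : G.IsComponentMax m) (j : V) :
    G.componentMaxMatrix R j m = if G.Reachable j m then 1 else 0 := by
  refine if_congr ⟨?_, fun h => Or.inr ⟨h, hm⟩⟩ rfl rfl
  rintro (rfl | ⟨h, -⟩)
  exacts [Reachable.refl j, h]

lemma componentMaxMatrix_apply_of_not_isComponentMax [DecidableEq V] {j' : V}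
    (hj' : ¬G.IsComponentMax j') (j : V) :
    G.componentMaxMatrix R j j' = (Pi.single j' 1 : V → R) j := by
  simp [componentMaxMatrix, Pi.single_apply, hj']

lemma filter_componentMaxMatrix_ne_zero_of_isComponentMax [Fintype V] [NeZero (1 : R)] {m : V}
    (hm : G.IsComponentMax m) :
    (Finset.univ.filter fun j => G.componentMaxMatrix R j m ≠ 0) =
      Finset.univ.filter fun j => G.Reachable j m := by
  ext j
  simp [componentMaxMatrix_apply_of_isComponentMax hm]

lemma filter_componentMaxMatrix_ne_zero_of_not_isComponentMax [Fintype V] [DecidableEq V]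
    [NeZero (1 : R)] {j' : V} (hj' : ¬G.IsComponentMax j') :
    (Finset.univ.filter fun j => G.componentMaxMatrix R j j' ≠ 0) = {j'} := by
  ext j
  simp [componentMaxMatrix_apply_of_not_isComponentMax hj', Pi.single_apply]

lemma one_lt_card_filter_componentMaxMatrix_ne_zero_iff [Fintype V] [NeZero (1 : R)]
    (hG : ∀ j, ∃ j', G.Adj j j') (j' : V) :
    1 < (Finset.univ.filter fun j => G.componentMaxMatrix R j j' ≠ 0).card ↔
      G.IsComponentMax j' := by
  classical
  by_cases hj' : G.IsComponentMax j'
  · obtain ⟨j, hadj⟩ := hG j'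
    simp only [hj', iff_true, filter_componentMaxMatrix_ne_zero_of_isComponentMax hj']
    exact Finset.one_lt_card.mpr ⟨j, by simpa using hadj.symm.reachable, j', by simp, hadj.ne.symm⟩
  · simp [hj', filter_componentMaxMatrix_ne_zero_of_not_isComponentMax hj']

lemma disjoint_filter_componentMaxMatrix_ne_zero [Fintype V] [NeZero (1 : R)] {m₁ m₂ : V}
    (hm₁ : G.IsComponentMax m₁) (hm₂ : G.IsComponentMax m₂) (hne : m₁ ≠ m₂) :
    Disjoint (Finset.univ.filter fun j => G.componentMaxMatrix R j m₁ ≠ 0)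
      (Finset.univ.filter fun j => G.componentMaxMatrix R j m₂ ≠ 0) := by
  rw [filter_componentMaxMatrix_ne_zero_of_isComponentMax hm₁,
    filter_componentMaxMatrix_ne_zero_of_isComponentMax hm₂]
  refine Finset.disjoint_filter.mpr fun j _ h₁ h₂ => hne ?_
  exact hm₁.eq_of_reachable hm₂ (h₁.symm.trans h₂)

end componentMaxMatrix

end SimpleGraph

def IsSignedIncidence {k l : ℕ} (M : Matrix (Fin k) (Fin l) ℝ) : Prop :=
  ∀ i, ∃ j₁ j₂, j₁ ≠ j₂ ∧ M i = Pi.single j₁ 1 - Pi.single j₂ 1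

namespace IsSignedIncidence

variable {k l : ℕ} {M : Matrix (Fin k) (Fin l) ℝ}

lemma mulVec_eq_zero_iff (hM : IsSignedIncidence M) {v : Fin l → ℝ} :
    M *ᵥ v = 0 ↔ ∀ a b, (columnGraph M).Adj a b → v a = v b := by
  constructor
  · rintro hv a b ⟨hab, i, ha, hb⟩
    obtain ⟨j₁, j₂, h12, hrow⟩ := hM i
    have hv12 : v j₁ = v j₂ := by
      have := congrFun hv i
      rw [mulVec_apply_of_row_eq_single_sub_single hrow] at this
      exact sub_eq_zero.mp this
    rw [hrow] at ha hb
    simp only [Pi.sub_apply, Pi.single_apply] at ha hb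
    split_ifs at ha hb <;> simp_all
  · intro h
    ext i
    obtain ⟨j₁, j₂, h12, hrow⟩ := hM i
    have hadj : (columnGraph M).Adj j₁ j₂ :=
      ⟨h12, i, by simp [hrow, h12], by simp [hrow, h12]⟩
    rw [mulVec_apply_of_row_eq_single_sub_single hrow, h j₁ j₂ hadj, sub_self, Pi.zero_apply]

lemma exists_adj (hM : IsSignedIncidence M) {j : Fin l} (hj : col M j ≠ 0) :
    ∃ j', (columnGraph M).Adj j j' := by
  obtain ⟨i, hi⟩ := Function.ne_iff.mp hj
  obtain ⟨j₁, j₂, h12, hrow⟩ := hM i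
  have hj12 : j = j₁ ∨ j = j₂ := by
    by_contra! h
    simp [col, hrow, h.1, h.2] at hi
  rcases hj12 with rfl | rfl
  · exact ⟨j₂, h12, i, hi, by simp [hrow, h12.symm]⟩
  · exact ⟨j₁, h12.symm, i, hi, by simp [hrow, h12]⟩

end IsSignedIncidence

lemma isSignedIncidence_mul_diagonal {k l : ℕ} {D : Matrix (Fin k) (Fin l) ℝ}
    (hD : NonBranching D)
    (hrow2 : ∀ i : Fin k, (Finset.univ.filter fun j => D i j ≠ 0).card = 2 ∨
      (Finset.univ.filter fun j => D i j ≠ 0).card = 0)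
    (hrows : ∀ i : Fin k, (fun j => D i j) ≠ 0)
    {ε : Fin l → ℝ} (hε : ∀ j, ε j = 1 ∨ ε j = -1) (hor : Oriented (D * Matrix.diagonal ε)) :
    IsSignedIncidence (D * Matrix.diagonal ε) := by
  intro i
  refine exists_eq_single_sub_single _ (fun j => ?_) ?_ (hor i).1 (hor i).2
  · rcases hD.1 i j with h | h | h <;> rcases hε j with h' | h' <;>
      simp [Matrix.mul_diagonal, h, h']
  · have hsupp : (Finset.univ.filter fun j => (D * Matrix.diagonal ε) i j ≠ 0) =
        Finset.univ.filter fun j => D i j ≠ 0 := by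
      ext j
      rcases hε j with h | h <;> simp [Matrix.mul_diagonal, h]
    rw [hsupp]
    refine (hrow2 i).resolve_right fun h0 => hrows i (funext fun j => ?_)
    simpa using Finset.filter_eq_empty_iff.mp (Finset.card_eq_zero.mp h0) (Finset.mem_univ j)

lemma columnGraph_mul_diagonal {k l : ℕ} (D : Matrix (Fin k) (Fin l) ℝ) {ε : Fin l → ℝ}
    (hε : ∀ j, ε j ≠ 0) : columnGraph (D * Matrix.diagonal ε) = columnGraph D := by
  ext a b
  simp [columnGraph, Matrix.mul_diagonal, hε]

section ColumnReduction

open SimpleGraph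

variable {k l : ℕ} {A : Matrix (Fin k) (Fin l) ℝ}

lemma col_mul_componentMaxMatrix_of_isComponentMax (hA : IsSignedIncidence A) {m : Fin l}
    (hm : (columnGraph A).IsComponentMax m) :
    col (A * (columnGraph A).componentMaxMatrix ℝ) m = 0 := by
  simp_rw [col_mul, componentMaxMatrix_apply_of_isComponentMax hm, hA.mulVec_eq_zero_iff]
  intro a b hab
  have hab' : (columnGraph A).Reachable a m ↔ (columnGraph A).Reachable b m :=
    ⟨hab.symm.reachable.trans, hab.reachable.trans⟩
  simp [hab']

lemma col_mul_componentMaxMatrix_of_not_isComponentMax {j : Fin l}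
    (hj : ¬(columnGraph A).IsComponentMax j) :
    col (A * (columnGraph A).componentMaxMatrix ℝ) j = col A j := by
  simp_rw [col_mul, componentMaxMatrix_apply_of_not_isComponentMax hj, Matrix.mulVec_single_one]
  rfl

lemma col_mul_componentMaxMatrix_eq_zero_iff (hA : IsSignedIncidence A)
    (hcols : ∀ j, col A j ≠ 0) (j : Fin l) :
    col (A * (columnGraph A).componentMaxMatrix ℝ) j = 0 ↔ (columnGraph A).IsComponentMax j := by
  by_cases hj : (columnGraph A).IsComponentMax j
  · simp [hj, col_mul_componentMaxMatrix_of_isComponentMax hA hj]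
  · simp [hj, col_mul_componentMaxMatrix_of_not_isComponentMax hj, hcols j]

lemma linearIndependent_col_mul_componentMaxMatrix (hA : IsSignedIncidence A) :
    LinearIndependent ℝ fun j : {j // col (A * (columnGraph A).componentMaxMatrix ℝ) j ≠ 0} =>
      col (A * (columnGraph A).componentMaxMatrix ℝ) j.1 := by
  refine linearIndependent_subtype_ne_zero _ fun c hc j hj => ?_
  have hj' : ¬(columnGraph A).IsComponentMax j :=
    fun h => hj (col_mul_componentMaxMatrix_of_isComponentMax hA h)
  let c' : Fin l → ℝ := fun j => if (columnGraph A).IsComponentMax j then 0 else c j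
  have hc' : A *ᵥ c' = 0 := by
    rw [← sum_smul_col, ← hc]
    refine Finset.sum_congr rfl fun j _ => ?_
    by_cases h : (columnGraph A).IsComponentMax j
    · simp [c', h, col_mul_componentMaxMatrix_of_isComponentMax hA h]
    · simp [c', h, col_mul_componentMaxMatrix_of_not_isComponentMax h]
  obtain ⟨m, hjm, hm⟩ := (columnGraph A).exists_reachable_isComponentMax j
  simpa [c', hj', hm] using hjm.apply_eq_of_forall_adj (hA.mulVec_eq_zero_iff.mp hc')


theorem weakColumnReduction_diagonal_mul_componentMaxMatrix
    {D : Matrix (Fin k) (Fin l) ℝ} {ε : Fin l → ℝ} (hε : ∀ j, ε j = 1 ∨ ε j = -1)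
    (hA : IsSignedIncidence (D * Matrix.diagonal ε)) (hcols : ∀ j, col D j ≠ 0) :
    WeakColumnReduction D
      (D * (Matrix.diagonal ε * (columnGraph D).componentMaxMatrix ℝ))
      (Matrix.diagonal ε * (columnGraph D).componentMaxMatrix ℝ) := by
  have hε0 (j : Fin l) : ε j ≠ 0 := by rcases hε j with h | h <;> simp [h]
  rw [← columnGraph_mul_diagonal D hε0]
  set A := D * Matrix.diagonal ε
  have hcolsA (j : Fin l) : col A j ≠ 0 := by
    obtain ⟨i, hi⟩ := Function.ne_iff.mp (hcols j)
    exact Function.ne_iff.mpr ⟨i, by simpa [A, col, Matrix.mul_diagonal, hε0 j] using hi⟩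
  have hG : ∀ j, ∃ j', (columnGraph A).Adj j j' := fun j => hA.exists_adj (hcolsA j)
  refine ⟨rfl, fun i j hji => ?_, fun i j => ?_, fun i => ?_, ?_, fun j₁ j₂ hne h₁ h₂ => ?_,
    fun j => ?_⟩
  · simp [Matrix.diagonal_mul, componentMaxMatrix_apply_of_lt hji]
  · rw [Matrix.diagonal_mul]
    rcases hε i with h | h <;>
      rcases (columnGraph A).componentMaxMatrix_apply_eq_zero_or_one (R := ℝ) i j with h' | h' <;>
      simp [h, h']
  · rw [Matrix.diagonal_mul, componentMaxMatrix_apply_self, mul_one]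
    exact (hε i).symm
  · rw [← Matrix.mul_assoc]
    exact linearIndependent_col_mul_componentMaxMatrix hA
  · rw [suppCard, filter_diagonal_mul_ne_zero hε0,
      one_lt_card_filter_componentMaxMatrix_ne_zero_iff hG] at h₁ h₂
    simp only [filter_diagonal_mul_ne_zero hε0]
    exact disjoint_filter_componentMaxMatrix_ne_zero h₁ h₂ hne
  · rw [suppCard, filter_diagonal_mul_ne_zero hε0,
      one_lt_card_filter_componentMaxMatrix_ne_zero_iff hG, ← Matrix.mul_assoc,
      col_mul_componentMaxMatrix_eq_zero_iff hA hcolsA]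

end ColumnReduction

/-- Let `D` be a regulable matrix (non-branching, each row with exactly two
or zero non-zero entries, orientable) with no zero rows and no zero columns.  Let `E` be a
diagonal matrix with diagonal entries in `{-1,1}` such that `D * E` is oriented and let `U`
be the upper-triangular matrix with `1`s on the diagonal and `U j m = 1` whenever `m` is the
largest column index of the component of `j` in the column graph.  Then
`R = D * (E * U)` is a weak column reduction of `D`. -/
theorem stmt5 {k l : ℕ} (D : Matrix (Fin k) (Fin l) ℝ)
    (hD : NonBranching D)
    (hrow2 : ∀ i : Fin k, (Finset.univ.filter fun j => D i j ≠ 0).card = 2 ∨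
      (Finset.univ.filter fun j => D i j ≠ 0).card = 0)
    (hrows : ∀ i : Fin k, (fun j => D i j) ≠ 0)
    (hcols : ∀ j, col D j ≠ 0)
    (ε : Fin l → ℝ) (hε : ∀ j, ε j = 1 ∨ ε j = -1)
    (hor : Oriented (D * Matrix.diagonal ε))
    (U : Matrix (Fin l) (Fin l) ℝ)
    (hU : ∀ j j' : Fin l, U j j' =
      if j = j' ∨ ((columnGraph D).Reachable j j' ∧
          ∀ j'' : Fin l, (columnGraph D).Reachable j j'' → j'' ≤ j') then 1 else 0) :
    WeakColumnReduction D (D * (Matrix.diagonal ε * U)) (Matrix.diagonal ε * U) := by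
  have hU' : U = (columnGraph D).componentMaxMatrix ℝ := by
    ext j j'
    simp [hU, SimpleGraph.componentMaxMatrix, SimpleGraph.reachable_and_forall_le_iff]
  rw [hU']
  exact weakColumnReduction_diagonal_mul_componentMaxMatrix hε
    (isSignedIncidence_mul_diagonal hD hrow2 hrows hε hor) hcols
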